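/- arXiv:1711.04877 — 4 statements merged into one kernel-verified Lean document; each statement's English description precedes it below -/
import Mathlib

section
/- Let n, p, N be positive integers, X a real n×p matrix, Π and Σ_M diagonal n×n matrices with strictly positive diagonal entries, and Σ_O an arbitrary real n×n matrix. Assume A := Xᵀ·Π⁻¹·Σ_M·X is invertible. Define Ĵ = (1/N)·A, V̂_U = (1/N²)·Xᵀ·Π⁻¹·Σ_O·Π⁻¹·X, V̂ = Ĵ⁻¹·V̂_U·Ĵ⁻¹, and Ĉ = X·A⁻¹·Xᵀ·Π⁻¹·Σ_O. Then tr(V̂·Ĵ) = (1/N)·tr(Π⁻¹·Ĉ) = (1/N)·Σᵢ (1/Πᵢᵢ)·Ĉᵢᵢ. -/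
/-! The sandwich collapses: `V̂ Ĵ = Ĵ⁻¹ V̂_U`, and since `Ĵ⁻¹ = N A⁻¹` this is
`(1/N) A⁻¹ Xᵀ Π⁻¹ Σ_O Π⁻¹ X`. Cyclicity of the trace moves the trailing factor `Π⁻¹ X` to
the front, which turns it into `(1/N) tr(Π⁻¹ Ĉ)`; for diagonal `Π` that trace is
`Σᵢ Ĉᵢᵢ / πᵢ`. -/

open Matrix

namespace Matrix

variable {m n K : Type*} [Fintype m] [DecidableEq m] [Field K]

theorem inv_smul_mul_sq_smul {A : Matrix m m K} (hA : IsUnit A.det) {c : K} (hc : c ≠ 0)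
    (W : Matrix m n K) : (c • A)⁻¹ * (c ^ 2 • W) = c • (A⁻¹ * W) := by
  have : Invertible c := invertibleOfNonzero hc
  rw [inv_smul A c hA, invOf_eq_inv, Matrix.smul_mul, Matrix.mul_smul, smul_smul, sq,
    inv_mul_cancel_left₀ hc]

theorem trace_diagonal_inv_mul {d : m → K} (hd : ∀ i, d i ≠ 0) (C : Matrix m m K) :
    ((diagonal d)⁻¹ * C).trace = ∑ i, 1 / d i * C i i := by
  have hinv : (diagonal d)⁻¹ = diagonal fun i ↦ (d i)⁻¹ :=
    inv_eq_left_inv <| by simp [diagonal_mul_diagonal, inv_mul_cancel₀ (hd _)]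
  simp [trace, hinv, diagonal_mul]

end Matrix

theorem stmt_2_general (n p N : ℕ) (hN : 0 < N)
    (X : Matrix (Fin n) (Fin p) ℝ)
    (π : Fin n → ℝ) (hπ : ∀ i, 0 < π i)
    (Pi : Matrix (Fin n) (Fin n) ℝ)
    (hPi : Pi = Matrix.diagonal π)
    (SigmaO : Matrix (Fin n) (Fin n) ℝ)
    (A : Matrix (Fin p) (Fin p) ℝ)
    (hAinv : IsUnit A.det)
    (J VU V : Matrix (Fin p) (Fin p) ℝ)
    (hJ : J = ((1 : ℝ) / N) • A)
    (hVU : VU = ((1 : ℝ) / (N : ℝ) ^ 2) • (Xᵀ * Pi⁻¹ * SigmaO * Pi⁻¹ * X))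
    (hV : V = J⁻¹ * VU * J⁻¹)
    (C : Matrix (Fin n) (Fin n) ℝ) (hC : C = X * A⁻¹ * Xᵀ * Pi⁻¹ * SigmaO) :
    (V * J).trace = ((1 : ℝ) / N) * (Pi⁻¹ * C).trace
      ∧ (V * J).trace = ((1 : ℝ) / N) * ∑ i, (1 / Pi i i) * C i i := by
  have hc : (1 : ℝ) / N ≠ 0 := by positivity
  have hJdet : IsUnit J.det := by
    rw [hJ, det_smul]
    exact (isUnit_iff_ne_zero.mpr hc).pow _ |>.mul hAinv
  have hVJ : V * J = ((1 : ℝ) / N) • (A⁻¹ * (Xᵀ * Pi⁻¹ * SigmaO * Pi⁻¹ * X)) := by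
    rw [hV, nonsing_inv_mul_cancel_right _ _ hJdet, hVU, ← _root_.one_div_pow, hJ,
      inv_smul_mul_sq_smul hAinv hc]
  have hHTE : (V * J).trace = (1 / N) * (Pi⁻¹ * C).trace := by
    have hcycle := trace_mul_comm (A⁻¹ * Xᵀ * Pi⁻¹ * SigmaO) (Pi⁻¹ * X)
    rw [hVJ, trace_smul, smul_eq_mul, hC]
    simpa only [Matrix.mul_assoc] using congrArg (1 / (N : ℝ) * ·) hcycle
  refine ⟨hHTE, hHTE.trans ?_⟩
  rw [hPi, trace_diagonal_inv_mul fun i ↦ (hπ i).ne']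
  simp only [diagonal_apply_eq]

/-- Theorem 3.1 (equivalence of dAIC and HTE penalties): the dAIC penalty
`tr(V̂·Ĵ)` equals the Horvitz–Thompson–Efron covariance penalty
`(1/N)·tr(Π⁻¹·Ĉ) = (1/N)·Σᵢ Ĉᵢᵢ/πᵢ`. -/
theorem stmt_2 (n p N : ℕ) (hn : 0 < n) (hp : 0 < p) (hN : 0 < N)
    (X : Matrix (Fin n) (Fin p) ℝ)
    (π σM : Fin n → ℝ) (hπ : ∀ i, 0 < π i) (hσM : ∀ i, 0 < σM i)
    (Pi SigmaM : Matrix (Fin n) (Fin n) ℝ)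
    (hPi : Pi = Matrix.diagonal π) (hSigmaM : SigmaM = Matrix.diagonal σM)
    (SigmaO : Matrix (Fin n) (Fin n) ℝ)
    (A : Matrix (Fin p) (Fin p) ℝ) (hA : A = Xᵀ * Pi⁻¹ * SigmaM * X)
    (hAinv : IsUnit A.det)
    (J VU V : Matrix (Fin p) (Fin p) ℝ)
    (hJ : J = ((1 : ℝ) / N) • A)
    (hVU : VU = ((1 : ℝ) / (N : ℝ) ^ 2) • (Xᵀ * Pi⁻¹ * SigmaO * Pi⁻¹ * X))
    (hV : V = J⁻¹ * VU * J⁻¹)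
    (C : Matrix (Fin n) (Fin n) ℝ) (hC : C = X * A⁻¹ * Xᵀ * Pi⁻¹ * SigmaO) :
    (V * J).trace = ((1 : ℝ) / N) * (Pi⁻¹ * C).trace
      ∧ (V * J).trace = ((1 : ℝ) / N) * ∑ i, (1 / Pi i i) * C i i :=
  stmt_2_general n p N hN X π hπ Pi hPi SigmaO A hAinv J VU V hJ hVU hV C hC
end

section
/- Let n, p, N be positive integers, X a real n×p matrix, Π a diagonal n×n matrix with strictly positive diagonal entries πᵢ, y ∈ ℝⁿ, and σ̂² > 0. Assume Xᵀ·Π⁻¹·X is invertible and set θ̂ = (XᵀΠ⁻¹X)⁻¹XᵀΠ⁻¹y, μ̂ = X·θ̂, and Σ_O = Diag((y − μ̂)(y − μ̂)ᵀ) (the diagonal matrix of squared residuals). Then (1/N)·Σᵢ (yᵢ − μ̂ᵢ)²/πᵢ + (2/N)·Σᵢ (1/πᵢ)·(X(XᵀΠ⁻¹X)⁻¹XᵀΠ⁻¹Σ_O)ᵢᵢ = σ̂² · [ (1/N)·Σᵢ (yᵢ − μ̂ᵢ)²/(πᵢ·σ̂²) + (2/(N·σ̂²))·tr{XᵀΠ⁻¹Σ_OΠ⁻¹X·(XᵀΠ⁻¹X)⁻¹}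 ]. -/
open Matrix

namespace Matrix

variable {m n R K : Type*} [Fintype m] [Fintype n]

theorem trace_mul_mul_cycle [CommSemiring R] (D S : Matrix m m R) (X : Matrix m n R)
    (B : Matrix n n R) (Y : Matrix n m R) :
    trace (D * (X * B * Y * D * S)) = trace (Y * D * S * D * X * B) := by
  rw [show D * (X * B * Y * D * S) = (D * X * B) * (Y * D * S) by simp only [Matrix.mul_assoc],
    trace_mul_comm]
  simp only [Matrix.mul_assoc]

variable [DecidableEq m]

theorem inv_diagonal_of_ne_zero [Field K] {v : m → K} (hv : ∀ i, v i ≠ 0) :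
    (diagonal v)⁻¹ = diagonal fun i => (v i)⁻¹ :=
  inv_eq_right_inv <| by simp [diagonal_mul_diagonal, hv]

theorem sum_mul_diag_eq_trace_diagonal_mul [CommSemiring R] (w : m → R) (M : Matrix m m R) :
    ∑ i, w i * M i i = trace (diagonal w * M) := by
  simp [trace, diagonal_mul]

/-- With `X B Y = X(XᵀΠ⁻¹X)⁻¹Xᵀ` and `S = Σ_O`, the left side is the HTE covariance penalty and
the right side the trace in the dAIC penalty. -/
theorem sum_inv_mul_diag_eq_trace [Field K] {π : m → K} (hπ : ∀ i, π i ≠ 0)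
    (S : Matrix m m K) (X : Matrix m n K) (B : Matrix n n K) (Y : Matrix n m K) :
    ∑ i, (1 / π i) * (X * B * Y * (diagonal π)⁻¹ * S) i i
      = trace (Y * (diagonal π)⁻¹ * S * (diagonal π)⁻¹ * X * B) := by
  simp_rw [one_div]
  rw [sum_mul_diag_eq_trace_diagonal_mul, ← inv_diagonal_of_ne_zero hπ, trace_mul_mul_cycle]

end Matrix

theorem stmt_3_general (n p N : ℕ)
    (X : Matrix (Fin n) (Fin p) ℝ)
    (π : Fin n → ℝ) (hπ : ∀ i, 0 < π i)
    (Pi : Matrix (Fin n) (Fin n) ℝ) (hPi : Pi = Matrix.diagonal π)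
    (y : Fin n → ℝ) (σ2 : ℝ) (hσ2 : 0 < σ2)
    (μ : Fin n → ℝ)
    (SigmaO : Matrix (Fin n) (Fin n) ℝ) :
    (1 / (N : ℝ)) * ∑ i, (y i - μ i) ^ 2 / π i
        + (2 / (N : ℝ)) * ∑ i, (1 / π i)
            * (X * (Xᵀ * Pi⁻¹ * X)⁻¹ * Xᵀ * Pi⁻¹ * SigmaO) i i
      = σ2 * ((1 / (N : ℝ)) * ∑ i, (y i - μ i) ^ 2 / (π i * σ2)
          + (2 / ((N : ℝ) * σ2))
            * (Xᵀ * Pi⁻¹ * SigmaO * Pi⁻¹ * X * (Xᵀ * Pi⁻¹ * X)⁻¹).trace) := by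
  subst hPi
  rw [sum_inv_mul_diag_eq_trace fun i => (hπ i).ne']
  simp_rw [← div_div, ← Finset.sum_div]
  field_simp [hσ2.ne']

/-- Section 3.1.1 worked example: for Horvitz–Thompson weighted least squares,
the HTE prediction error estimator equals `dAIC · σ̂²`. -/
theorem stmt_3 (n p N : ℕ) (hn : 0 < n) (hp : 0 < p) (hN : 0 < N)
    (X : Matrix (Fin n) (Fin p) ℝ)
    (π : Fin n → ℝ) (hπ : ∀ i, 0 < π i)
    (Pi : Matrix (Fin n) (Fin n) ℝ) (hPi : Pi = Matrix.diagonal π)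
    (y : Fin n → ℝ) (σ2 : ℝ) (hσ2 : 0 < σ2)
    (hinv : IsUnit (Xᵀ * Pi⁻¹ * X).det)
    (θ : Fin p → ℝ) (hθ : θ = (Xᵀ * Pi⁻¹ * X)⁻¹ *ᵥ (Xᵀ *ᵥ (Pi⁻¹ *ᵥ y)))
    (μ : Fin n → ℝ) (hμ : μ = X *ᵥ θ)
    (SigmaO : Matrix (Fin n) (Fin n) ℝ)
    (hSigmaO : SigmaO = Matrix.diagonal (fun i => (y i - μ i) ^ 2)) :
    (1 / (N : ℝ)) * ∑ i, (y i - μ i) ^ 2 / π i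
        + (2 / (N : ℝ)) * ∑ i, (1 / π i)
            * (X * (Xᵀ * Pi⁻¹ * X)⁻¹ * Xᵀ * Pi⁻¹ * SigmaO) i i
      = σ2 * ((1 / (N : ℝ)) * ∑ i, (y i - μ i) ^ 2 / (π i * σ2)
          + (2 / ((N : ℝ) * σ2))
            * (Xᵀ * Pi⁻¹ * SigmaO * Pi⁻¹ * X * (Xᵀ * Pi⁻¹ * X)⁻¹).trace) :=
  stmt_3_general n p N X π hπ Pi hPi y σ2 hσ2 μ SigmaO
end

section
/- Let (Ω, P) be a probability space, let y and ŷ be real-valued square-integrable random variables, and let y⁰ be a square-integrable random variable that is independent of ŷ and has the same first and second moments as y (E[y⁰] = E[y], E[(y⁰)²] = E[y²]). Then E[(y⁰ − ŷ)²] = E[(y − ŷ)²] + 2·Cov(y, ŷ). -/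
/-!
Expanding both squares, the second moments of `y⁰` and `y` cancel, and independence turns
`E[y⁰ ŷ]` into `E[y⁰] E[ŷ] = E[y] E[ŷ]`; what remains is `2 (E[y ŷ] - E[y] E[ŷ])`.
-/

open MeasureTheory ProbabilityTheory

theorem MeasureTheory.integral_sub_sq_of_memLp {Ω : Type*} [MeasurableSpace Ω] {μ : Measure Ω}
    {f g : Ω → ℝ} (hf : MemLp f 2 μ) (hg : MemLp g 2 μ) :
    ∫ ω, (f ω - g ω) ^ 2 ∂μ
      = ∫ ω, f ω ^ 2 ∂μ - 2 * ∫ ω, f ω * g ω ∂μ + ∫ ω, g ω ^ 2 ∂μ := by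
  have hfg : Integrable (fun ω => f ω * g ω) μ := hf.integrable_mul hg
  have hsq : Integrable (fun ω => f ω ^ 2 - 2 * (f ω * g ω)) μ :=
    hf.integrable_sq.sub (hfg.const_mul 2)
  simp_rw [sub_sq, mul_assoc]
  rw [integral_add hsq hg.integrable_sq, integral_sub hf.integrable_sq (hfg.const_mul 2),
    integral_const_mul]

theorem stmt_4_general {Ω : Type*} [MeasurableSpace Ω] (P : Measure Ω)
    (y yhat y0 : Ω → ℝ)
    (hy : MemLp y 2 P) (hyhat : MemLp yhat 2 P) (hy0 : MemLp y0 2 P)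
    (hindep : IndepFun y0 yhat P)
    (hmom1 : ∫ ω, y0 ω ∂P = ∫ ω, y ω ∂P)
    (hmom2 : ∫ ω, (y0 ω) ^ 2 ∂P = ∫ ω, (y ω) ^ 2 ∂P) :
    ∫ ω, (y0 ω - yhat ω) ^ 2 ∂P
      = ∫ ω, (y ω - yhat ω) ^ 2 ∂P
        + 2 * ((∫ ω, y ω * yhat ω ∂P) - (∫ ω, y ω ∂P) * (∫ ω, yhat ω ∂P)) := by
  have hmul : ∫ ω, y0 ω * yhat ω ∂P = (∫ ω, y0 ω ∂P) * ∫ ω, yhat ω ∂P :=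
    hindep.integral_fun_mul_eq_mul_integral hy0.1 hyhat.1
  rw [integral_sub_sq_of_memLp hy0 hyhat, integral_sub_sq_of_memLp hy hyhat, hmul, hmom1, hmom2]
  ring

/-- Squared-error special case of Efron's optimism theorem (Mallows's Cp penalty):
`E[(y⁰ − ŷ)²] = E[(y − ŷ)²] + 2·Cov(y, ŷ)`. -/
theorem stmt_4 {Ω : Type*} [MeasurableSpace Ω] (P : Measure Ω) [IsProbabilityMeasure P]
    (y yhat y0 : Ω → ℝ)
    (hy : MemLp y 2 P) (hyhat : MemLp yhat 2 P) (hy0 : MemLp y0 2 P)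
    (hindep : IndepFun y0 yhat P)
    (hmom1 : ∫ ω, y0 ω ∂P = ∫ ω, y ω ∂P)
    (hmom2 : ∫ ω, (y0 ω) ^ 2 ∂P = ∫ ω, (y ω) ^ 2 ∂P) :
    ∫ ω, (y0 ω - yhat ω) ^ 2 ∂P
      = ∫ ω, (y ω - yhat ω) ^ 2 ∂P
        + 2 * ((∫ ω, y ω * yhat ω ∂P) - (∫ ω, y ω ∂P) * (∫ ω, yhat ω ∂P)) :=
  stmt_4_general P y yhat y0 hy hyhat hy0 hindep hmom1 hmom2
end

section
/- Let ψ : ℝ → ℝ be twice differentiable with ψ'' > 0 on an open interval D, and let λ : M → D denote the inverse function of ψ' (so ψ'(λ(μ)) = μ for all μ in the image M of ψ' restricted to D). Define q(u) = 2·(ψ(λ(u)) − u·λ(u)) for u ∈ M, and the q-class loss Q(u, m) = q(m) + q'(m)·(u − m) − q(u). Then for all y, μ̂ ∈ M: Q(y, μ̂) = 2·[(λ(y)·y − ψ(λ(y))) − (λ(μ̂)·y − ψ(λ(μ̂)))], i.e., the q-class loss built from this q equals the exponential-family deviance, twice the log-likelihood ratio between the saturated natural parameter λ(y) and the fitted natural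 parameter λ(μ̂) under the density exp(λ·y − ψ(λ)). -/
/-! The function `u ↦ u·λ(u) − ψ(λ(u))` is the Legendre transform of `ψ`, and by the envelope
argument its derivative at `m` is `λ(m)`: the terms coming from `λ'(m)` cancel because
`ψ'(λ(m)) = m`. Hence `q'(m) = −2·λ(m)`, and substituting this into `Q` leaves exactly the
deviance. Differentiability of `λ` comes from the inverse function theorem in one variable,
`ψ'` being continuous and strictly increasing on the interval `D`. -/

open Set Filter Topology

section InverseOfStrictMono

variable {α β : Type*} [ConditionallyCompleteLinearOrder α] [TopologicalSpace α] [OrderTopology α]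
  [DenselyOrdered α] [NoMinOrder α] [NoMaxOrder α]
  [LinearOrder β] [TopologicalSpace β] [OrderTopology β]
  {f : α → β} {s : Set α}

theorem StrictMonoOn.image_mem_nhds (hf : StrictMonoOn f s) (hfc : ContinuousOn f s) {x : α}
    (hs : s ∈ 𝓝 x) : f '' s ∈ 𝓝 (f x) := by
  obtain ⟨l, u, ⟨hlx, hxu⟩, hsub⟩ := mem_nhds_iff_exists_Ioo_subset.1 hs
  obtain ⟨a, hla, hax⟩ := exists_between hlx
  obtain ⟨b, hxb, hbu⟩ := exists_between hxu
  have hab : a ≤ b := (hax.trans hxb).le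
  have hIcc : Icc a b ⊆ s := (Icc_subset_Ioo hla hbu).trans hsub
  have hxs : x ∈ s := hsub ⟨hlx, hxu⟩
  refine mem_of_superset (Ioo_mem_nhds (hf (hIcc ⟨le_rfl, hab⟩) hxs hax)
    (hf hxs (hIcc ⟨hab, le_rfl⟩) hxb)) ?_
  exact (intermediate_value_Ioo hab (hfc.mono hIcc)).trans
    (image_mono (Ioo_subset_Icc_self.trans hIcc))

theorem StrictMonoOn.continuousAt_of_rightInvOn {g : β → α} (hf : StrictMonoOn f s)
    (hfc : ContinuousOn f s) (hs : IsOpen s) (hgs : MapsTo g (f '' s) s) (hgf : RightInvOn g f (f '' s)) {y : β}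
    (hy : y ∈ f '' s) : ContinuousAt g y := by
  have hg_mono : MonotoneOn g (f '' s) := fun u hu v hv huv ↦
    le_of_not_gt fun hvu ↦ (hgf hv ▸ hgf hu ▸ huv).not_gt (hf (hgs hv) (hgs hu) hvu)
  have hgf_self : ∀ x ∈ s, g (f x) = x := fun x hx ↦
    hf.injOn (hgs (mem_image_of_mem f hx)) hx (hgf (mem_image_of_mem f hx))
  have hg_image : s ⊆ g '' (f '' s) := fun x hx ↦ ⟨f x, mem_image_of_mem f hx, hgf_self x hx⟩
  obtain ⟨x, hx, rfl⟩ := hy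
  refine continuousAt_of_monotoneOn_of_image_mem_nhds hg_mono
    (hf.image_mem_nhds hfc (hs.mem_nhds hx)) (mem_of_superset (hs.mem_nhds ?_) hg_image)
  exact hgs (mem_image_of_mem f hx)

end InverseOfStrictMono

theorem StrictMonoOn.hasDerivAt_of_rightInvOn {f g : ℝ → ℝ} {s : Set ℝ} (hf : StrictMonoOn f s)
    (hfc : ContinuousOn f s) (hs : IsOpen s) (hgs : MapsTo g (f '' s) s)
    (hgf : RightInvOn g f (f '' s)) {y f' : ℝ} (hy : y ∈ f '' s) (hf' : HasDerivAt f f' (g y))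
    (hf'0 : f' ≠ 0) : HasDerivAt g f'⁻¹ y := by
  obtain ⟨x, hx, rfl⟩ := hy
  refine hf'.of_local_left_inverse
    (hf.continuousAt_of_rightInvOn hfc hs hgs hgf (mem_image_of_mem f hx)) hf'0 ?_
  exact eventually_of_mem (hf.image_mem_nhds hfc (hs.mem_nhds hx)) hgf

theorem HasDerivAt.legendre {ψ g : ℝ → ℝ} {g' y : ℝ} (hψ : HasDerivAt ψ y (g y))
    (hg : HasDerivAt g g' y) : HasDerivAt (fun u ↦ u * g u - ψ (g u)) (g y) y := by
  refine (((hasDerivAt_id' y).fun_mul hg).fun_sub (hψ.comp y hg)).congr_deriv ?_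
  ring

/-- The q-class loss built from `q(u) = 2·(ψ(λ(u)) − u·λ(u))` equals the
exponential-family deviance, twice the log-likelihood ratio between the saturated
and fitted natural parameters (Equations (3)–(4) of the paper). -/
theorem stmt_6 (ψ : ℝ → ℝ) (D : Set ℝ) (hDopen : IsOpen D) (hDconn : D.OrdConnected)
    (hψ1 : ∀ x ∈ D, DifferentiableAt ℝ ψ x)
    (hψ2 : ∀ x ∈ D, DifferentiableAt ℝ (deriv ψ) x)
    (hψpos : ∀ x ∈ D, 0 < deriv (deriv ψ) x)
    (M : Set ℝ) (hM : M = deriv ψ '' D)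
    (lam : ℝ → ℝ) (hlam : ∀ u ∈ M, lam u ∈ D ∧ deriv ψ (lam u) = u)
    (q : ℝ → ℝ) (hq : ∀ u, q u = 2 * (ψ (lam u) - u * lam u))
    (Q : ℝ → ℝ → ℝ) (hQ : ∀ u m, Q u m = q m + deriv q m * (u - m) - q u) :
    ∀ y ∈ M, ∀ μ ∈ M,
      Q y μ = 2 * ((lam y * y - ψ (lam y)) - (lam μ * y - ψ (lam μ))) := by
  subst hM
  intro y _ μ hμ
  have hψ'c : ContinuousOn (deriv ψ) D := fun x hx ↦ (hψ2 x hx).continuousAt.continuousWithinAt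
  have hψ'mono : StrictMonoOn (deriv ψ) D := strictMonoOn_of_deriv_pos hDconn.convex hψ'c
    fun x hx ↦ hψpos x (hDopen.interior_eq ▸ hx)
  obtain ⟨hμD, hψ'μ⟩ := hlam μ hμ
  have hlam' : HasDerivAt lam (deriv (deriv ψ) (lam μ))⁻¹ μ :=
    hψ'mono.hasDerivAt_of_rightInvOn hψ'c hDopen (fun u hu ↦ (hlam u hu).1)
      (fun u hu ↦ (hlam u hu).2) hμ (hψ2 _ hμD).hasDerivAt (hψpos _ hμD).ne'
  have hψμ : HasDerivAt ψ μ (lam μ) := (hψ1 _ hμD).hasDerivAt.congr_deriv hψ'μ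
  have hq' : HasDerivAt q (-2 * lam μ) μ := by
    rw [funext hq]
    exact ((hψμ.legendre hlam').const_mul (-2)).congr_of_eventuallyEq
      (Eventually.of_forall fun u ↦ by ring)
  rw [hQ, hq, hq, hq'.deriv]
  ring
end
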